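/- Let R be a ring (associative with identity, not necessarily commutative). Then R is uniquely D-nil-clean if and only if R is a D-ring or R is uniquely nil-clean. -/

import Mathlib

/-!
If some zero-divisor `q = w + e` (`w` nilpotent, `e` idempotent) is not nilpotent, then `e` is
neither `0` nor `1`. Uniqueness applied to `f = 0 + f = (-u) + (f + u)`, for the square-zero
elements `u = f x (1 - f)` and `u = (1 - f) x f`, forces every idempotent `f ≠ 1` (a zero-divisor,
annihilated by `1 - f`) to be central. Then
every `a` splits as `a e + a (1 - e)` with both summands zero-divisors, and the unique nil-clean
decompositions of the two Peirce components glue to a unique one of `a`.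

Conversely, in a D-ring the idempotent part `f` of a nil-clean decomposition of a zero-divisor is
not `1` (that would make the zero-divisor a unit), so `f` is itself a zero-divisor, hence
nilpotent, hence `0`.
-/

universe u v

/-- An element `e` is a very idempotent if `e` or `-e` is an idempotent. -/
def IsVeryIdempotent {R : Type u} [Ring R] (e : R) : Prop :=
  IsIdempotentElem e ∨ IsIdempotentElem (-e)

/-- `a` is uniquely weakly nil-clean: it is a sum of a nilpotent and a very idempotent,
and for any two such representations `a = w₁ + e₁ = w₂ + e₂` one has `e₁ ^ 2 = e₂ ^ 2`. -/
def IsUniquelyWeaklyNilClean {R : Type u} [Ring R] (a : R) : Prop :=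
  (∃ w e : R, IsNilpotent w ∧ IsVeryIdempotent e ∧ a = w + e) ∧
  ∀ w₁ e₁ w₂ e₂ : R, IsNilpotent w₁ → IsVeryIdempotent e₁ → IsNilpotent w₂ →
    IsVeryIdempotent e₂ → a = w₁ + e₁ → a = w₂ + e₂ → e₁ ^ 2 = e₂ ^ 2

/-- A ring is uniquely weakly nil-clean if every element is. -/
def UniquelyWeaklyNilCleanRing (R : Type u) [Ring R] : Prop :=
  ∀ a : R, IsUniquelyWeaklyNilClean a

/-- `a` is uniquely nil-clean: it is a sum of a nilpotent and an idempotent,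
and for any two such representations `a = w₁ + e₁ = w₂ + e₂` one has `e₁ = e₂`. -/
def IsUniquelyNilClean {R : Type u} [Ring R] (a : R) : Prop :=
  (∃ w e : R, IsNilpotent w ∧ IsIdempotentElem e ∧ a = w + e) ∧
  ∀ w₁ e₁ w₂ e₂ : R, IsNilpotent w₁ → IsIdempotentElem e₁ → IsNilpotent w₂ →
    IsIdempotentElem e₂ → a = w₁ + e₁ → a = w₂ + e₂ → e₁ = e₂

/-- A ring is uniquely nil-clean if every element is. -/
def UniquelyNilCleanRing (R : Type u) [Ring R] : Prop :=
  ∀ a : R, IsUniquelyNilClean a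

/-- `a` is a zero-divisor: there are nonzero `b, c` with `a * b = 0` and `c * a = 0`. -/
def IsZeroDivisorPair {R : Type u} [Ring R] (a : R) : Prop :=
  ∃ b c : R, b ≠ 0 ∧ c ≠ 0 ∧ a * b = 0 ∧ c * a = 0

/-- A ring is abelian if every idempotent is central. -/
def AbelianRing (R : Type u) [Ring R] : Prop :=
  ∀ e : R, IsIdempotentElem e → ∀ x : R, e * x = x * e

/-- A ring is periodic if every element satisfies `a ^ m = a ^ n` for distinct positive `m, n`. -/
def PeriodicRing (R : Type u) [Ring R] : Prop :=
  ∀ a : R, ∃ m n : ℕ, 0 < m ∧ 0 < n ∧ m ≠ n ∧ a ^ m = a ^ n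

/-- A Boolean ring: every element is idempotent. -/
def IsBooleanRing (R : Type u) [Ring R] : Prop :=
  ∀ a : R, IsIdempotentElem a

/-- `R / J(R)` is isomorphic to `S`, expressed via a surjective ring homomorphism
whose kernel is exactly the Jacobson radical of `R`. -/
def QuotJacobsonIsoTo (R : Type u) [Ring R] (S : Type v) [Ring S] : Prop :=
  ∃ f : R →+* S, Function.Surjective f ∧
    ∀ a : R, f a = 0 ↔ a ∈ Ideal.jacobson (⊥ : Ideal R)

variable {R : Type u} [Ring R]

lemma IsZeroDivisorPair.not_isUnit {a : R} (ha : IsZeroDivisorPair a) : ¬IsUnit a := by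
  obtain ⟨b, -, hb, -, hab, -⟩ := ha
  exact fun hu => hb (hu.mul_right_eq_zero.mp hab)

lemma IsZeroDivisorPair.ne_add_one {a w : R} (ha : IsZeroDivisorPair a) (hw : IsNilpotent w) :
    a ≠ w + 1 :=
  fun h => ha.not_isUnit (h ▸ hw.isUnit_add_one)

lemma IsIdempotentElem.isZeroDivisorPair {e : R} (he : IsIdempotentElem e) (h1 : e ≠ 1) :
    IsZeroDivisorPair e :=
  have hne : 1 - e ≠ 0 := sub_ne_zero.mpr h1.symm
  ⟨1 - e, 1 - e, hne, hne, he.mul_one_sub_self, he.one_sub_mul_self⟩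

lemma isZeroDivisorPair_mul_of_forall_commute {c : R} (hc : IsIdempotentElem c)
    (hcen : ∀ x, Commute c x) (h1 : c ≠ 1) (a : R) : IsZeroDivisorPair (a * c) := by
  have hne : 1 - c ≠ 0 := sub_ne_zero.mpr h1.symm
  refine ⟨1 - c, 1 - c, hne, hne, by rw [mul_assoc, hc.mul_one_sub_self, mul_zero], ?_⟩
  rw [← mul_assoc, ((Commute.one_left a).sub_left (hcen a)).eq, mul_assoc,
    hc.one_sub_mul_self, mul_zero]

section DRing

variable (hD : ∀ a : R, IsZeroDivisorPair a → IsNilpotent a)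
include hD

lemma eq_zero_of_isZeroDivisorPair_eq_add {a w e : R} (ha : IsZeroDivisorPair a)
    (hw : IsNilpotent w) (he : IsIdempotentElem e) (h : a = w + e) : e = 0 := by
  have h1 : e ≠ 1 := by
    rintro rfl
    exact ha.ne_add_one hw h
  exact he.eq_zero_of_isNilpotent (hD e (he.isZeroDivisorPair h1))

lemma isUniquelyNilClean_of_isZeroDivisorPair {a : R} (ha : IsZeroDivisorPair a) :
    IsUniquelyNilClean a := by
  refine ⟨⟨a, 0, hD a ha, .zero, (add_zero a).symm⟩, ?_⟩
  intro w₁ e₁ w₂ e₂ hw₁ he₁ hw₂ he₂ h₁ h₂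
  rw [eq_zero_of_isZeroDivisorPair_eq_add hD ha hw₁ he₁ h₁,
    eq_zero_of_isZeroDivisorPair_eq_add hD ha hw₂ he₂ h₂]

end DRing

lemma IsUniquelyNilClean.eq_zero_of_mul_add_mul_eq {e u : R} (h : IsUniquelyNilClean e)
    (he : IsIdempotentElem e) (hsum : e * u + u * e = u) (hsq : u * u = 0) : u = 0 := by
  have heu : IsIdempotentElem (e + u) := by
    rw [IsIdempotentElem, add_mul, mul_add, mul_add, he.eq, hsq, add_zero, add_assoc, hsum]
  have hu : IsNilpotent (-u) := ⟨2, by rw [sq, neg_mul_neg, hsq]⟩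
  have : e = e + u := h.2 0 e (-u) (e + u) .zero he hu heu (zero_add e).symm (by abel)
  exact left_eq_add.mp this

lemma IsIdempotentElem.commute_of_isUniquelyNilClean {e : R} (he : IsIdempotentElem e)
    (h : IsUniquelyNilClean e) (x : R) : Commute e x := by
  have hr : e * x * (1 - e) = 0 := by
    refine h.eq_zero_of_mul_add_mul_eq he ?_ ?_
    · rw [← mul_assoc, ← mul_assoc, he.eq, mul_assoc _ (1 - e), he.one_sub_mul_self, mul_zero,
        add_zero]
    · rw [show e * x * (1 - e) * (e * x * (1 - e)) = e * x * ((1 - e) * e) * x * (1 - e) by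
        noncomm_ring, he.one_sub_mul_self, mul_zero, zero_mul, zero_mul]
  have hl : (1 - e) * x * e = 0 := by
    refine h.eq_zero_of_mul_add_mul_eq he ?_ ?_
    · rw [← mul_assoc, ← mul_assoc, he.mul_one_sub_self, zero_mul, zero_mul, zero_add,
        mul_assoc _ e, he.eq]
    · rw [show (1 - e) * x * e * ((1 - e) * x * e) = (1 - e) * x * (e * (1 - e)) * x * e by
        noncomm_ring, he.mul_one_sub_self, mul_zero, zero_mul, zero_mul]
  rw [mul_sub, mul_one, sub_eq_zero] at hr
  rw [sub_mul, sub_mul, one_mul, sub_eq_zero] at hl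
  exact hr.trans hl.symm

lemma commute_of_forall_isZeroDivisorPair
    (H : ∀ a : R, IsZeroDivisorPair a → IsUniquelyNilClean a) {e : R} (he : IsIdempotentElem e)
    (x : R) : Commute e x := by
  rcases eq_or_ne e 1 with rfl | h1
  · exact Commute.one_left x
  · exact he.commute_of_isUniquelyNilClean (H e (he.isZeroDivisorPair h1)) x

section CentralIdempotent

variable {c : R} (hc : IsIdempotentElem c) (hcen : ∀ x, Commute c x)
include hc hcen

lemma nilClean_mul_of_forall_commute {a w e : R} (hw : IsNilpotent w) (he : IsIdempotentElem e)
    (h : a = w + e) : IsNilpotent (w * c) ∧ IsIdempotentElem (e * c) ∧ a * c = w * c + e * c :=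
  ⟨(hcen w).symm.isNilpotent_mul_right hw, he.mul_of_commute (hcen e).symm hc, by rw [h, add_mul]⟩

lemma isUniquelyNilClean_of_mul_of_mul_one_sub {a : R} (h₁ : IsUniquelyNilClean (a * c))
    (h₂ : IsUniquelyNilClean (a * (1 - c))) : IsUniquelyNilClean a := by
  have hc' : IsIdempotentElem (1 - c) := hc.one_sub
  have hcen' : ∀ x, Commute (1 - c) x := fun x => (Commute.one_left x).sub_left (hcen x)
  have orth : ∀ x y : R, x * c * (y * (1 - c)) = 0 ∧ y * (1 - c) * (x * c) = 0 := fun x y =>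
    ⟨by rw [(hcen y).mul_mul_mul_comm, hc.mul_one_sub_self, mul_zero],
      by rw [(hcen' x).mul_mul_mul_comm, hc.one_sub_mul_self, mul_zero]⟩
  have split : ∀ x : R, x = x * c + x * (1 - c) := fun x => by rw [mul_sub, mul_one, add_sub_cancel]
  constructor
  · obtain ⟨w₁, e₁, hw₁, he₁, hae₁⟩ := h₁.1
    obtain ⟨w₂, e₂, hw₂, he₂, hae₂⟩ := h₂.1
    obtain ⟨hn₁, hi₁, hd₁⟩ := nilClean_mul_of_forall_commute hc hcen hw₁ he₁ hae₁
    obtain ⟨hn₂, hi₂, hd₂⟩ := nilClean_mul_of_forall_commute hc' hcen' hw₂ he₂ hae₂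
    rw [mul_assoc, hc.eq] at hd₁
    rw [mul_assoc, hc'.eq] at hd₂
    refine ⟨w₁ * c + w₂ * (1 - c), e₁ * c + e₂ * (1 - c), ?_, ?_, ?_⟩
    · refine Commute.isNilpotent_add ?_ hn₁ hn₂
      rw [Commute, SemiconjBy, (orth w₁ w₂).1, (orth w₁ w₂).2]
    · exact hi₁.add hi₂ (by rw [(orth e₁ e₂).1, (orth e₁ e₂).2, add_zero])
    · rw [split a, hd₁, hd₂]
      abel
  · intro v f v' f' hv hf hv' hf' hvf hvf'
    obtain ⟨hn₁, hi₁, hd₁⟩ := nilClean_mul_of_forall_commute hc hcen hv hf hvf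
    obtain ⟨hn₁', hi₁', hd₁'⟩ := nilClean_mul_of_forall_commute hc hcen hv' hf' hvf'
    obtain ⟨hn₂, hi₂, hd₂⟩ := nilClean_mul_of_forall_commute hc' hcen' hv hf hvf
    obtain ⟨hn₂', hi₂', hd₂'⟩ := nilClean_mul_of_forall_commute hc' hcen' hv' hf' hvf'
    rw [split f, split f', h₁.2 _ _ _ _ hn₁ hi₁ hn₁' hi₁' hd₁ hd₁',
      h₂.2 _ _ _ _ hn₂ hi₂ hn₂' hi₂' hd₂ hd₂']

end CentralIdempotent

lemma uniquelyNilCleanRing_of_not_isNilpotent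
    (H : ∀ a : R, IsZeroDivisorPair a → IsUniquelyNilClean a) {q : R} (hq : IsZeroDivisorPair q)
    (hqn : ¬IsNilpotent q) : UniquelyNilCleanRing R := by
  obtain ⟨⟨w, e, hw, he, rfl⟩, -⟩ := H q hq
  have he0 : e ≠ 0 := by
    rintro rfl
    exact hqn (by rwa [add_zero])
  have he1 : e ≠ 1 := by
    rintro rfl
    exact hq.ne_add_one hw rfl
  have hcen : ∀ x, Commute e x := commute_of_forall_isZeroDivisorPair H he
  have hcen' : ∀ x, Commute (1 - e) x := fun x => (Commute.one_left x).sub_left (hcen x)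
  intro a
  exact isUniquelyNilClean_of_mul_of_mul_one_sub he hcen
    (H _ (isZeroDivisorPair_mul_of_forall_commute he hcen he1 a))
    (H _ (isZeroDivisorPair_mul_of_forall_commute he.one_sub hcen' (mt sub_eq_self.mp he0) a))

theorem stmt16 (R : Type u) [Ring R] :
    (∀ a : R, IsZeroDivisorPair a → IsUniquelyNilClean a) ↔
      ((∀ a : R, IsZeroDivisorPair a → IsNilpotent a) ∨ UniquelyNilCleanRing R) := by
  constructor
  · intro H
    by_cases hD : ∀ a : R, IsZeroDivisorPair a → IsNilpotent a
    · exact .inl hD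
    · push Not at hD
      obtain ⟨q, hq, hqn⟩ := hD
      exact .inr (uniquelyNilCleanRing_of_not_isNilpotent H hq hqn)
  · rintro (hD | hU) a ha
    · exact isUniquelyNilClean_of_isZeroDivisorPair hD ha
    · exact hU a
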